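/- Existence and uniqueness for the SVF denoising problem: for f ∈ L²(Ω), the problem min over (u,v) ∈ L²(Ω) × M(Ω)^d of (λ/2)‖u − f‖₂² + ‖v‖_{M(Ω)} subject to the weak constraint Δu = ∇·v (no-flux boundary conditions) admits a minimizer, and the u-component of the minimizer is unique. -/

import Mathlib

open MeasureTheory Filter
open scoped ENNReal RealInnerProductSpace

abbrev Euc (d : ℕ) := EuclideanSpace ℝ (Fin d)

noncomputable def lapl (d : ℕ) (φ : Euc d → ℝ) (x : Euc d) : ℝ :=
  ∑ i : Fin d, iteratedFDeriv ℝ 2 φ x ![EuclideanSpace.single i 1, EuclideanSpace.single i 1]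

noncomputable def diverg (d : ℕ) (g : Euc d → Euc d) (x : Euc d) : ℝ :=
  ∑ i : Fin d, fderiv ℝ g x (EuclideanSpace.single i 1) i

structure VRadon (d : ℕ) (Ω : Set (Euc d)) where
  pair : (Euc d → Euc d) → ℝ
  pair_add : ∀ f g, pair (f + g) = pair f + pair g
  pair_smul : ∀ (c : ℝ) f, pair (c • f) = c * pair f
  bdd : BddAbove {r | ∃ φ : Euc d → Euc d, Continuous φ ∧ (∀ x ∈ Ω, ‖φ x‖ ≤ 1) ∧ r = pair φ}

noncomputable def VRadon.tvNorm {d : ℕ} {Ω : Set (Euc d)} (v : VRadon d Ω) : ℝ :=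
  sSup {r | ∃ φ : Euc d → Euc d, Continuous φ ∧ (∀ x ∈ Ω, ‖φ x‖ ≤ 1) ∧ r = v.pair φ}

def Admissible (d : ℕ) (Ω : Set (Euc d)) (ν : Euc d → Euc d) (u : Euc d → ℝ)
    (v : VRadon d Ω) : Prop :=
  ∀ φ : Euc d → ℝ, ContDiff ℝ 2 φ → (∀ x ∈ frontier Ω, ⟪gradient φ x, ν x⟫ = 0) →
    (∫ x in Ω, lapl d φ x * u x) + v.pair (fun x => gradient φ x) = 0

noncomputable def SVF (d : ℕ) (Ω : Set (Euc d)) (ν : Euc d → Euc d) (u : Euc d → ℝ) : ℝ≥0∞ :=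
  ⨅ (v : VRadon d Ω) (_ : Admissible d Ω ν u v), ENNReal.ofReal v.tvNorm

def TVset (d : ℕ) (Ω : Set (Euc d)) (u : Euc d → ℝ) : Set ℝ :=
  {r | ∃ g : Euc d → Euc d, ContDiff ℝ 1 g ∧ HasCompactSupport g ∧ tsupport g ⊆ Ω ∧
    (∀ x, ‖g x‖ ≤ 1) ∧ r = ∫ x in Ω, u x * diverg d g x}

noncomputable def TVsup (d : ℕ) (Ω : Set (Euc d)) (u : Euc d → ℝ) : ℝ := sSup (TVset d Ω u)

/-!
Averaging two feasible pairs gives a feasible pair, and Apollonius' identity in `L²(Ω)` shows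
that this lowers the energy by at least `λ/8 ‖u₁ - u₂‖²`. Hence the `u`-components of a minimizing
sequence are Cauchy in `L²(Ω)`, and two minimizers have the same `u`. For the limit `u`, the
functional `∇φ ↦ -∫ Δφ u` on gradients of no-flux test functions is the limit of `v_n(∇φ)`, so it
is bounded by `(m - (λ/2)‖u - f‖²) · sup_Ω ‖∇φ‖`, where `m` is the infimum of the energy; its
Hahn–Banach extension is a `v` making `(u, v)` admissible with energy at most `m`.
-/

open Set Bornology Topology

section StrongMidpointConvexity

variable {P E : Type*} [NormedAddCommGroup E]

def StrongMidpointConvex (J : P → ℝ) (π : P → E) (c : ℝ) : Prop :=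
  ∀ p q, ∃ r, J r + c * ‖π p - π q‖ ^ 2 ≤ (J p + J q) / 2

variable {J : P → ℝ} {π : P → E} {c : ℝ}

theorem StrongMidpointConvex.cauchySeq_of_tendsto_iInf (hJ : StrongMidpointConvex J π c)
    (hc : 0 < c) (hbdd : BddBelow (range J)) {p : ℕ → P}
    (hp : Tendsto (fun n => J (p n)) atTop (𝓝 (⨅ q, J q))) :
    CauchySeq fun n => π (p n) := by
  set m := ⨅ q, J q
  have hdist : ∀ n k, dist (π (p n)) (π (p k)) ≤ √((J (p n) - m + (J (p k) - m)) / (2 * c)) := by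
    intro n k
    obtain ⟨r, hr⟩ := hJ (p n) (p k)
    have hmr : m ≤ J r := ciInf_le hbdd r
    rw [dist_eq_norm]
    refine Real.le_sqrt_of_sq_le ?_
    rw [le_div_iff₀ (by positivity)]
    linarith
  have hgap : Tendsto (fun n => J (p n) - m) atTop (𝓝 0) := by
    simpa using hp.sub_const m
  rw [cauchySeq_iff_tendsto_dist_atTop_0]
  refine squeeze_zero (fun _ => dist_nonneg) (fun nk => hdist nk.1 nk.2) ?_
  rw [← prod_atTop_atTop_eq]
  simpa using (((hgap.comp tendsto_fst).add (hgap.comp tendsto_snd)).div_const (2 * c)).sqrt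

theorem StrongMidpointConvex.eq_of_forall_le_of_le (hJ : StrongMidpointConvex J π c) (hc : 0 < c)
    {p q : P} (hp : ∀ r, J p ≤ J r) (hq : J q ≤ J p) : π q = π p := by
  obtain ⟨r, hr⟩ := hJ q p
  have hsq : c * ‖π q - π p‖ ^ 2 ≤ 0 := by linarith [hp r]
  have h0 : ‖π q - π p‖ ^ 2 = 0 := le_antisymm (nonpos_of_mul_nonpos_right hsq hc) (sq_nonneg _)
  simpa [sub_eq_zero] using h0

theorem StrongMidpointConvex.exists_tendsto_iInf [CompleteSpace E] [Nonempty P]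
    (hJ : StrongMidpointConvex J π c) (hc : 0 < c) (hbdd : BddBelow (range J)) :
    ∃ (p : ℕ → P) (e : E), Tendsto (fun n => J (p n)) atTop (𝓝 (⨅ q, J q)) ∧
      Tendsto (fun n => π (p n)) atTop (𝓝 e) := by
  obtain ⟨y, -, hy, hyJ⟩ := exists_seq_tendsto_sInf (range_nonempty J) hbdd
  choose p hp using hyJ
  have hpJ : Tendsto (fun n => J (p n)) atTop (𝓝 (⨅ q, J q)) := by
    rw [show (fun n => J (p n)) = y from funext hp]
    exact hy
  exact ⟨p, cauchySeq_tendsto_of_complete (hJ.cauchySeq_of_tendsto_iInf hc hbdd hpJ) |>.imp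
    fun _ he => ⟨hpJ, he⟩⟩

end StrongMidpointConvexity

theorem LinearMap.exists_comp_eq_of_le_sublinear {T E : Type*} [AddCommGroup T] [Module ℝ T]
    [AddCommGroup E] [Module ℝ E] (A : T →ₗ[ℝ] E) (I : T →ₗ[ℝ] ℝ) (N : E → ℝ)
    (N_hom : ∀ c : ℝ, 0 < c → ∀ x, N (c • x) = c * N x) (N_add : ∀ x y, N (x + y) ≤ N x + N y)
    (hI : ∀ t, I t ≤ N (A t)) : ∃ Φ : E →ₗ[ℝ] ℝ, Φ ∘ₗ A = I ∧ ∀ x, Φ x ≤ N x := by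
  have N_zero : N 0 = 0 := by
    have := N_hom 2 two_pos 0
    rw [smul_zero] at this
    linarith
  -- `I` vanishes on `ker A`, so `{(A t, I t)}` is the graph of a partial linear map.
  set G := LinearMap.range (A.prod I)
  have hG : ∀ x ∈ G, x.1 = 0 → x.2 = 0 := by
    rintro _ ⟨t, rfl⟩ (ht : A t = 0)
    have h1 := hI t
    have h2 := hI (-t)
    simp only [map_neg, ht, neg_zero, N_zero] at h1 h2
    show I t = 0
    linarith
  have hgraph : ∀ y, y ∈ G.toLinearPMap.graph ↔ y ∈ G :=
    SetLike.ext_iff.1 (G.toLinearPMap_graph_eq hG)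
  obtain ⟨Φ, hΦ, hΦN⟩ := exists_extension_of_le_sublinear G.toLinearPMap N N_hom N_add (by
    intro x
    obtain ⟨t, ht⟩ := (hgraph _).1 (G.toLinearPMap.mem_graph x)
    obtain ⟨hx, hLx⟩ := Prod.ext_iff.1 ht
    simp only [LinearMap.prod_apply] at hx hLx
    rw [← hx, ← hLx]
    exact hI t)
  refine ⟨Φ, LinearMap.ext fun t => ?_, hΦN⟩
  obtain ⟨x, hx, hLx⟩ := G.toLinearPMap.mem_graph_iff.1 ((hgraph (A t, I t)).2 ⟨t, rfl⟩)
  rw [LinearMap.comp_apply, show A t = x from hx.symm, hΦ, hLx]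

section BoundedOn

variable {α E : Type*} [NormedAddCommGroup E] [NormedSpace ℝ E] {s : Set α}

variable (E) in
def boundedOn (s : Set α) : Submodule ℝ (α → E) :=
  (lpSubmodule ℝ (fun _ : s => E) ∞).comap (LinearMap.funLeft ℝ E ((↑) : s → α))

theorem mem_boundedOn {g : α → E} {C : ℝ} (h : ∀ x ∈ s, ‖g x‖ ≤ C) : g ∈ boundedOn E s :=
  memℓp_infty_iff.2 ⟨C, by rintro _ ⟨x, rfl⟩; exact h x x.2⟩

noncomputable def restrictLinfty (s : Set α) : boundedOn E s →ₗ[ℝ] lp (fun _ : s => E) ∞ where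
  toFun g := ⟨fun x => (g : α → E) x, g.2⟩
  map_add' _ _ := rfl
  map_smul' _ _ := rfl

theorem norm_apply_le_norm_restrictLinfty (g : boundedOn E s) {x : α} (hx : x ∈ s) :
    ‖(g : α → E) x‖ ≤ ‖restrictLinfty s g‖ :=
  lp.norm_apply_le_norm ENNReal.top_ne_zero (restrictLinfty s g) ⟨x, hx⟩

theorem norm_restrictLinfty_le (g : boundedOn E s) {C : ℝ} (hC : 0 ≤ C)
    (h : ∀ x ∈ s, ‖(g : α → E) x‖ ≤ C) : ‖restrictLinfty s g‖ ≤ C :=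
  lp.norm_le_of_forall_le hC fun x => h x x.2

end BoundedOn

theorem Continuous.mem_boundedOn_of_isBounded {X E : Type*} [PseudoMetricSpace X] [ProperSpace X]
    [NormedAddCommGroup E] [NormedSpace ℝ E] {s : Set X} (hs : IsBounded s) {g : X → E}
    (hg : Continuous g) : g ∈ boundedOn E s := by
  obtain ⟨C, hC⟩ := hs.isCompact_closure.exists_bound_of_continuousOn hg.continuousOn
  exact mem_boundedOn fun x hx => hC x (subset_closure hx)

theorem Continuous.memLp_restrict_of_isBounded {X E : Type*} [PseudoMetricSpace X]
    [ProperSpace X] [MeasurableSpace X] [OpensMeasurableSpace X] {μ : Measure X}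
    [IsFiniteMeasureOnCompacts μ] [NormedAddCommGroup E] {s : Set X} (hs : IsBounded s)
    {g : X → E} (hg : Continuous g) (p : ℝ≥0∞) : MemLp g p (μ.restrict s) := by
  have : IsFiniteMeasure (μ.restrict s) := isFiniteMeasure_restrict.2 hs.measure_lt_top.ne
  obtain ⟨C, hC⟩ := hs.isCompact_closure.exists_bound_of_continuousOn hg.continuousOn
  refine MemLp.of_bound hg.aestronglyMeasurable C ?_
  exact ae_restrict_of_ae_restrict_of_subset subset_closure
    (ae_restrict_of_forall_mem isClosed_closure.measurableSet hC)

section L2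

variable {α : Type*} [MeasurableSpace α] {μ : Measure α} {u w : α → ℝ}

theorem MeasureTheory.MemLp.integral_mul_eq_inner_toLp (hw : MemLp w 2 μ) (hu : MemLp u 2 μ) :
    ∫ x, w x * u x ∂μ = ⟪hw.toLp w, hu.toLp u⟫ := by
  rw [L2.inner_def]
  refine integral_congr_ae ?_
  filter_upwards [hw.coeFn_toLp, hu.coeFn_toLp] with x hwx hux
  simp [hwx, hux, mul_comm]

theorem MeasureTheory.MemLp.integral_sub_sq_eq_dist_toLp_sq (hu : MemLp u 2 μ) (hw : MemLp w 2 μ) :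
    ∫ x, (u x - w x) ^ 2 ∂μ = dist (hu.toLp u) (hw.toLp w) ^ 2 := by
  rw [dist_eq_norm, ← MemLp.toLp_sub, ← real_inner_self_eq_norm_sq,
    ← (hu.sub hw).integral_mul_eq_inner_toLp (hu.sub hw)]
  simp [sq]

theorem MeasureTheory.MemLp.tendsto_integral_mul {ι : Type*} {l : Filter ι} (hw : MemLp w 2 μ)
    {u : ι → α → ℝ} (hu : ∀ n, MemLp (u n) 2 μ) {U : Lp ℝ 2 μ}
    (hU : Tendsto (fun n => (hu n).toLp (u n)) l (𝓝 U)) :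
    Tendsto (fun n => ∫ x, w x * u n x ∂μ) l (𝓝 (∫ x, w x * U x ∂μ)) := by
  simp_rw [hw.integral_mul_eq_inner_toLp (hu _), hw.integral_mul_eq_inner_toLp (Lp.memLp U),
    Lp.toLp_coeFn]
  exact tendsto_const_nhds.inner hU

end L2

namespace VRadon

variable {d : ℕ} {Ω : Set (Euc d)}

theorem pair_zero (v : VRadon d Ω) : v.pair 0 = 0 := by
  simpa using v.pair_smul 0 0

theorem pair_le_tvNorm (v : VRadon d Ω) {φ : Euc d → Euc d} (hφ : Continuous φ)
    (hφΩ : ∀ x ∈ Ω, ‖φ x‖ ≤ 1) : v.pair φ ≤ v.tvNorm :=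
  le_csSup v.bdd ⟨φ, hφ, hφΩ, rfl⟩

theorem tvNorm_nonneg (v : VRadon d Ω) : 0 ≤ v.tvNorm := by
  simpa [v.pair_zero] using v.pair_le_tvNorm (φ := 0) continuous_const (by simp)

theorem pair_le_tvNorm_mul (v : VRadon d Ω) {φ : Euc d → Euc d} (hφ : Continuous φ) {s : ℝ}
    (hs : 0 ≤ s) (hφΩ : ∀ x ∈ Ω, ‖φ x‖ ≤ s) : v.pair φ ≤ v.tvNorm * s := by
  -- `s` may vanish while `φ` does not vanish off `Ω`, so normalise by `s + ε` instead.
  have hε : ∀ ε > 0, v.pair φ ≤ v.tvNorm * (s + ε) := by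
    intro ε hε
    have hsε : 0 < s + ε := by linarith
    have h := v.pair_le_tvNorm (hφ.const_smul (s + ε)⁻¹) fun x hx => by
      rw [Pi.smul_apply, norm_smul, Real.norm_of_nonneg (inv_nonneg.2 hsε.le),
        inv_mul_le_one₀ hsε]
      linarith [hφΩ x hx]
    rw [v.pair_smul, inv_mul_le_iff₀ hsε] at h
    linarith
  have hlim : Tendsto (fun ε => v.tvNorm * (s + ε)) (𝓝[>] 0) (𝓝 (v.tvNorm * s)) := by
    have h := (((continuous_const_add s).const_mul v.tvNorm).tendsto 0).mono_left
      (nhdsWithin_le_nhds (s := Ioi 0))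
    rwa [add_zero] at h
  exact ge_of_tendsto hlim (eventually_nhdsWithin_of_forall hε)

instance : Zero (VRadon d Ω) where
  zero :=
    { pair := 0
      pair_add := by simp
      pair_smul := by simp
      bdd := ⟨0, by rintro r ⟨φ, -, -, rfl⟩; simp⟩ }

@[simp]
theorem zero_pair (φ : Euc d → Euc d) : (0 : VRadon d Ω).pair φ = 0 := rfl

protected noncomputable def midpoint (v w : VRadon d Ω) : VRadon d Ω where
  pair φ := (v.pair φ + w.pair φ) / 2
  pair_add φ ψ := by rw [v.pair_add, w.pair_add]; ring
  pair_smul c φ := by rw [v.pair_smul, w.pair_smul]; ring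
  bdd := ⟨(v.tvNorm + w.tvNorm) / 2, by
    rintro r ⟨φ, hφ, hφΩ, rfl⟩
    linarith [v.pair_le_tvNorm hφ hφΩ, w.pair_le_tvNorm hφ hφΩ]⟩

theorem tvNorm_midpoint_le (v w : VRadon d Ω) :
    (v.midpoint w).tvNorm ≤ (v.tvNorm + w.tvNorm) / 2 :=
  Real.sSup_le (by
    rintro r ⟨φ, hφ, hφΩ, rfl⟩
    show (v.pair φ + w.pair φ) / 2 ≤ _
    linarith [v.pair_le_tvNorm hφ hφΩ, w.pair_le_tvNorm hφ hφΩ])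
    (by linarith [v.tvNorm_nonneg, w.tvNorm_nonneg])

theorem exists_pair_comp_eq {T : Type*} [AddCommGroup T] [Module ℝ T]
    (A : T →ₗ[ℝ] (Euc d → Euc d)) (I : T →ₗ[ℝ] ℝ) (C : ℝ)
    (hA : ∀ t, A t ∈ boundedOn (Euc d) Ω)
    (hI : ∀ t B, 0 ≤ B → (∀ x ∈ Ω, ‖A t x‖ ≤ B) → I t ≤ C * B) :
    ∃ v : VRadon d Ω, (∀ t, v.pair (A t) = I t) ∧ v.tvNorm ≤ C := by
  have hC : 0 ≤ C := by simpa using hI 0 1 zero_le_one (by simp)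
  obtain ⟨Φ, hΦA, hΦN⟩ := LinearMap.exists_comp_eq_of_le_sublinear (A.codRestrict _ hA) I
    (fun g => C * ‖restrictLinfty Ω g‖)
    (fun c hc g => by rw [map_smul, norm_smul, Real.norm_of_nonneg hc.le]; ring)
    (fun g h => by rw [map_add, ← mul_add]; exact mul_le_mul_of_nonneg_left (norm_add_le _ _) hC)
    (fun t => hI t _ (norm_nonneg _) fun x hx => norm_apply_le_norm_restrictLinfty ⟨A t, hA t⟩ hx)
  obtain ⟨Ψ, hΨ⟩ := LinearMap.exists_extend Φ
  have hΨΦ : ∀ g : boundedOn (Euc d) Ω, Ψ g = Φ g := LinearMap.congr_fun hΨ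
  have hΨC : ∀ φ : Euc d → Euc d, (∀ x ∈ Ω, ‖φ x‖ ≤ 1) → Ψ φ ≤ C := by
    intro φ hφ
    calc Ψ φ = Φ ⟨φ, mem_boundedOn hφ⟩ := hΨΦ ⟨φ, mem_boundedOn hφ⟩
      _ ≤ C * ‖restrictLinfty Ω ⟨φ, mem_boundedOn hφ⟩‖ := hΦN _
      _ ≤ C * 1 := mul_le_mul_of_nonneg_left (norm_restrictLinfty_le _ zero_le_one hφ) hC
      _ = C := mul_one C
  refine ⟨⟨Ψ, map_add Ψ, map_smul Ψ, ⟨C, ?_⟩⟩, fun t => ?_, Real.sSup_le ?_ hC⟩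
  · rintro _ ⟨φ, -, hφ, rfl⟩
    exact hΨC φ hφ
  · exact (hΨΦ ⟨A t, hA t⟩).trans (LinearMap.congr_fun hΦA t)
  · rintro _ ⟨φ, -, hφ, rfl⟩
    exact hΨC φ hφ

end VRadon

section Calculus

variable {d : ℕ} {φ ψ : Euc d → ℝ}

theorem gradient_add {x : Euc d} (hφ : DifferentiableAt ℝ φ x) (hψ : DifferentiableAt ℝ ψ x) :
    gradient (φ + ψ) x = gradient φ x + gradient ψ x := by
  simp only [gradient, fderiv_add hφ hψ, map_add]

theorem gradient_const_smul (c : ℝ) {x : Euc d} (hφ : DifferentiableAt ℝ φ x) :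
    gradient (c • φ) x = c • gradient φ x := by
  simp only [gradient, fderiv_const_smul hφ c, map_smul]

theorem ContDiff.continuous_gradient (hφ : ContDiff ℝ 1 φ) : Continuous (gradient φ) :=
  (InnerProductSpace.toDual ℝ (Euc d)).symm.continuous.comp (hφ.continuous_fderiv one_ne_zero)

theorem lapl_add (hφ : ContDiff ℝ 2 φ) (hψ : ContDiff ℝ 2 ψ) (x : Euc d) :
    lapl d (φ + ψ) x = lapl d φ x + lapl d ψ x := by
  simp only [lapl, iteratedFDeriv_add_apply hφ.contDiffAt hψ.contDiffAt,
    add_apply, Finset.sum_add_distrib]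

theorem lapl_const_smul (c : ℝ) (hφ : ContDiff ℝ 2 φ) (x : Euc d) :
    lapl d (c • φ) x = c * lapl d φ x := by
  simp only [lapl, iteratedFDeriv_const_smul_apply hφ.contDiffAt,
    smul_apply, smul_eq_mul, Finset.mul_sum]

theorem ContDiff.continuous_lapl (hφ : ContDiff ℝ 2 φ) : Continuous (lapl d φ) :=
  continuous_finsetSum _ fun _ _ =>
    (continuous_eval_const _).comp (hφ.continuous_iteratedFDeriv le_rfl)

variable (d) in
def noFluxTestFunctions (Ω : Set (Euc d)) (ν : Euc d → Euc d) : Submodule ℝ (Euc d → ℝ) where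
  carrier := {φ | ContDiff ℝ 2 φ ∧ ∀ x ∈ frontier Ω, ⟪gradient φ x, ν x⟫ = 0}
  add_mem' := by
    rintro φ ψ ⟨hφ, hφν⟩ ⟨hψ, hψν⟩
    refine ⟨hφ.add hψ, fun x hx => ?_⟩
    rw [gradient_add (hφ.differentiable two_ne_zero x) (hψ.differentiable two_ne_zero x),
      inner_add_left, hφν x hx, hψν x hx, add_zero]
  zero_mem' := ⟨contDiff_const, fun x _ => by simp [gradient]⟩
  smul_mem' := by
    rintro c φ ⟨hφ, hφν⟩
    refine ⟨hφ.const_smul c, fun x hx => ?_⟩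
    rw [gradient_const_smul c (hφ.differentiable two_ne_zero x), real_inner_smul_left,
      hφν x hx, mul_zero]

end Calculus

section Admissible

variable {d : ℕ} {Ω : Set (Euc d)} {ν : Euc d → Euc d}

theorem memLp_lapl (hΩ : IsBounded Ω) {φ : Euc d → ℝ} (hφ : ContDiff ℝ 2 φ) :
    MemLp (lapl d φ) 2 (volume.restrict Ω) :=
  hφ.continuous_lapl.memLp_restrict_of_isBounded hΩ 2

theorem admissible_zero : Admissible d Ω ν 0 0 := fun φ _ _ => by simp

theorem Admissible.midpoint (hΩ : IsBounded Ω) {u₁ u₂ : Euc d → ℝ} {v₁ v₂ : VRadon d Ω}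
    (hu₁ : MemLp u₁ 2 (volume.restrict Ω)) (hu₂ : MemLp u₂ 2 (volume.restrict Ω))
    (h₁ : Admissible d Ω ν u₁ v₁) (h₂ : Admissible d Ω ν u₂ v₂) :
    Admissible d Ω ν (_root_.midpoint ℝ u₁ u₂) (v₁.midpoint v₂) := by
  intro φ hφ hφν
  have hint : ∀ {u}, MemLp u 2 (volume.restrict Ω) →
      Integrable (fun x => lapl d φ x * u x) (volume.restrict Ω) :=
    fun hu => (memLp_lapl hΩ hφ).integrable_mul hu
  have hsplit : ∫ x in Ω, lapl d φ x * _root_.midpoint ℝ u₁ u₂ x =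
      ((∫ x in Ω, lapl d φ x * u₁ x) + ∫ x in Ω, lapl d φ x * u₂ x) / 2 := by
    rw [← integral_add (hint hu₁) (hint hu₂), ← integral_div]
    congr 1 with x
    simp only [midpoint_eq_smul_add, Pi.smul_apply, Pi.add_apply, smul_eq_mul, invOf_eq_inv]
    ring
  have hpair : (v₁.midpoint v₂).pair (fun x => gradient φ x) =
      (v₁.pair (fun x => gradient φ x) + v₂.pair (fun x => gradient φ x)) / 2 := rfl
  rw [hsplit, hpair]
  linarith [h₁ φ hφ hφν, h₂ φ hφ hφν]

variable (d Ω ν) in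
noncomputable def noFluxGradient : noFluxTestFunctions d Ω ν →ₗ[ℝ] (Euc d → Euc d) where
  toFun φ := gradient (φ : Euc d → ℝ)
  map_add' φ ψ := funext fun x =>
    gradient_add (φ.2.1.differentiable two_ne_zero x) (ψ.2.1.differentiable two_ne_zero x)
  map_smul' c φ := funext fun x => gradient_const_smul c (φ.2.1.differentiable two_ne_zero x)

noncomputable def laplPairing (hΩ : IsBounded Ω) (u : Lp ℝ 2 (volume.restrict Ω)) :
    noFluxTestFunctions d Ω ν →ₗ[ℝ] ℝ where
  toFun φ := ∫ x in Ω, lapl d φ x * u x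
  map_add' φ ψ := by
    have hint : ∀ φ : noFluxTestFunctions d Ω ν,
        Integrable (fun x => lapl d φ x * u x) (volume.restrict Ω) :=
      fun φ => (memLp_lapl hΩ φ.2.1).integrable_mul (Lp.memLp u)
    simp only [Submodule.coe_add, lapl_add φ.2.1 ψ.2.1, add_mul, integral_add (hint φ) (hint ψ)]
  map_smul' c φ := by
    simp only [Submodule.coe_smul, lapl_const_smul c φ.2.1, mul_assoc, integral_const_mul,
      smul_eq_mul, RingHom.id_apply]

theorem exists_admissible_tvNorm_le_of_tendsto (hΩ : IsBounded Ω) {u : ℕ → Euc d → ℝ}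
    {v : ℕ → VRadon d Ω} (hu : ∀ n, MemLp (u n) 2 (volume.restrict Ω))
    (hadm : ∀ n, Admissible d Ω ν (u n) (v n)) {U : Lp ℝ 2 (volume.restrict Ω)}
    (hU : Tendsto (fun n => (hu n).toLp (u n)) atTop (𝓝 U)) {b : ℕ → ℝ} {c : ℝ}
    (hb : ∀ n, (v n).tvNorm ≤ b n) (hbc : Tendsto b atTop (𝓝 c)) :
    ∃ w : VRadon d Ω, Admissible d Ω ν U w ∧ w.tvNorm ≤ c := by
  have hI : ∀ φ B, 0 ≤ B → (∀ x ∈ Ω, ‖noFluxGradient d Ω ν φ x‖ ≤ B) →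
      -laplPairing hΩ U φ ≤ c * B := by
    intro φ B hB hφB
    refine le_of_tendsto_of_tendsto' ((memLp_lapl hΩ φ.2.1).tendsto_integral_mul hu hU).neg
      (hbc.mul_const B) fun n => ?_
    have hpair : (∫ x in Ω, lapl d φ x * u n x) + (v n).pair (noFluxGradient d Ω ν φ) = 0 :=
      hadm n φ φ.2.1 φ.2.2
    calc -∫ x in Ω, lapl d φ x * u n x = (v n).pair (noFluxGradient d Ω ν φ) := by linarith
      _ ≤ (v n).tvNorm * B :=
        (v n).pair_le_tvNorm_mul (φ.2.1.of_le one_le_two).continuous_gradient hB hφB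
      _ ≤ b n * B := mul_le_mul_of_nonneg_right (hb n) hB
  obtain ⟨w, hwA, hwc⟩ := VRadon.exists_pair_comp_eq (noFluxGradient d Ω ν) (-laplPairing hΩ U) c
    (fun φ => (φ.2.1.of_le one_le_two).continuous_gradient.mem_boundedOn_of_isBounded hΩ) hI
  refine ⟨w, fun φ hφ hφν => ?_, hwc⟩
  have hwφ : w.pair (gradient φ) = -∫ x in Ω, lapl d φ x * U x := hwA ⟨φ, hφ, hφν⟩
  rw [hwφ, add_neg_cancel]

end Admissible

structure FeasiblePair (d : ℕ) (Ω : Set (Euc d)) (ν : Euc d → Euc d) where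
  u : Euc d → ℝ
  v : VRadon d Ω
  memLp : MemLp u 2 (volume.restrict Ω)
  admissible : Admissible d Ω ν u v

namespace FeasiblePair

variable {d : ℕ} {Ω : Set (Euc d)} {ν : Euc d → Euc d} {f : Euc d → ℝ} {lam : ℝ}

noncomputable def toL2 (p : FeasiblePair d Ω ν) : Lp ℝ 2 (volume.restrict Ω) := p.memLp.toLp p.u

variable (f lam) in
noncomputable def energy (p : FeasiblePair d Ω ν) : ℝ :=
  lam / 2 * (∫ x in Ω, (p.u x - f x) ^ 2) + p.v.tvNorm

theorem energy_eq (hf : MemLp f 2 (volume.restrict Ω)) (p : FeasiblePair d Ω ν) :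
    p.energy f lam = lam / 2 * dist p.toL2 (hf.toLp f) ^ 2 + p.v.tvNorm := by
  rw [energy, p.memLp.integral_sub_sq_eq_dist_toLp_sq hf, toL2]

theorem energy_nonneg (hlam : 0 ≤ lam) (p : FeasiblePair d Ω ν) : 0 ≤ p.energy f lam :=
  add_nonneg (mul_nonneg (by positivity) (integral_nonneg fun _ => sq_nonneg _))
    p.v.tvNorm_nonneg

instance : Nonempty (FeasiblePair d Ω ν) := ⟨⟨0, 0, MemLp.zero, admissible_zero⟩⟩

theorem strongMidpointConvex_energy (hΩ : IsBounded Ω) (hf : MemLp f 2 (volume.restrict Ω)) :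
    StrongMidpointConvex (energy f lam : FeasiblePair d Ω ν → ℝ) toL2 (lam / 8) := by
  rintro ⟨u₁, v₁, hu₁, h₁⟩ ⟨u₂, v₂, hu₂, h₂⟩
  have hmem : MemLp (midpoint ℝ u₁ u₂) 2 (volume.restrict Ω) := by
    simpa only [midpoint_eq_smul_add] using (hu₁.add hu₂).const_smul _
  let m : FeasiblePair d Ω ν := ⟨midpoint ℝ u₁ u₂, v₁.midpoint v₂, hmem, h₁.midpoint hΩ hu₁ hu₂ h₂⟩
  have hm : m.toL2 = midpoint ℝ (hu₁.toLp u₁) (hu₂.toLp u₂) := rfl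
  have hApollonius :=
    EuclideanGeometry.dist_sq_add_dist_sq_eq_two_mul_dist_midpoint_sq_add_half_dist_sq
      (hf.toLp f) (hu₁.toLp u₁) (hu₂.toLp u₂)
  refine ⟨m, ?_⟩
  rw [energy_eq hf, energy_eq hf, energy_eq hf, hm, ← dist_eq_norm]
  simp only [toL2, dist_comm _ (hf.toLp f)]
  linear_combination (-lam / 4) * hApollonius + v₁.tvNorm_midpoint_le v₂

end FeasiblePair

theorem svf_denoising_existence_uniqueness_general (d : ℕ) (Ω : Set (Euc d))
    (ν : Euc d → Euc d) (hΩb : Bornology.IsBounded Ω)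
    (f : Euc d → ℝ) (hf : MemLp f 2 (volume.restrict Ω))
    (lam : ℝ) (hlam : 0 < lam) :
    ∃ (u : Euc d → ℝ) (v : VRadon d Ω),
      MemLp u 2 (volume.restrict Ω) ∧ Admissible d Ω ν u v ∧
      (∀ (u' : Euc d → ℝ) (v' : VRadon d Ω),
        MemLp u' 2 (volume.restrict Ω) → Admissible d Ω ν u' v' →
        lam / 2 * (∫ x in Ω, (u x - f x) ^ 2) + v.tvNorm
          ≤ lam / 2 * (∫ x in Ω, (u' x - f x) ^ 2) + v'.tvNorm) ∧
      (∀ (u' : Euc d → ℝ) (v' : VRadon d Ω),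
        MemLp u' 2 (volume.restrict Ω) → Admissible d Ω ν u' v' →
        (∀ (u'' : Euc d → ℝ) (v'' : VRadon d Ω),
          MemLp u'' 2 (volume.restrict Ω) → Admissible d Ω ν u'' v'' →
          lam / 2 * (∫ x in Ω, (u' x - f x) ^ 2) + v'.tvNorm
            ≤ lam / 2 * (∫ x in Ω, (u'' x - f x) ^ 2) + v''.tvNorm) →
        u' =ᵐ[volume.restrict Ω] u) := by
  have hJ := FeasiblePair.strongMidpointConvex_energy (ν := ν) (lam := lam) hΩb hf
  have hc : 0 < lam / 8 := by positivity
  have hbdd : BddBelow (range fun p : FeasiblePair d Ω ν => p.energy f lam) :=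
    ⟨0, by rintro _ ⟨p, rfl⟩; exact p.energy_nonneg hlam.le⟩
  obtain ⟨p, U, hpJ, hpU⟩ := hJ.exists_tendsto_iInf hc hbdd
  obtain ⟨w, hw, hwU⟩ := exists_admissible_tvNorm_le_of_tendsto hΩb (fun n => (p n).memLp)
    (fun n => (p n).admissible) hpU
    (b := fun n => (p n).energy f lam - lam / 2 * dist (p n).toL2 (hf.toLp f) ^ 2)
    (fun n => by rw [(p n).energy_eq hf]; linarith)
    (hpJ.sub (((hpU.dist tendsto_const_nhds).pow 2).const_mul (lam / 2)))
  let q : FeasiblePair d Ω ν := ⟨U, w, Lp.memLp U, hw⟩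
  have hqU : q.toL2 = U := Lp.toLp_coeFn U (Lp.memLp U)
  have hq : ∀ r : FeasiblePair d Ω ν, q.energy f lam ≤ r.energy f lam := fun r => by
    rw [q.energy_eq hf, hqU]
    linarith [ciInf_le hbdd r]
  refine ⟨U, w, Lp.memLp U, hw, fun u' v' hu' hv' => hq ⟨u', v', hu', hv'⟩,
    fun u' v' hu' hv' hopt => ?_⟩
  have hu'U : hu'.toLp u' = U := hqU ▸ (hJ.eq_of_forall_le_of_le hc (p := ⟨u', v', hu', hv'⟩)
    (fun r => hopt r.u r.v r.memLp r.admissible) (hq _)).symm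
  rw [← hu'U]
  exact hu'.coeFn_toLp.symm

/-- existence and uniqueness for the SVF denoising problem: for
`f ∈ L²(Ω)`, the problem `min (λ/2)‖u-f‖₂² + ‖v‖_M` over `L²`-functions `u` and
vector measures `v` subject to the weak constraint `Δu = ∇·v` (no-flux boundary
conditions) admits a minimizer (given feasibility), and the `u`-component of
any minimizer is unique (a.e. on `Ω`). -/
theorem svf_denoising_existence_uniqueness (d : ℕ) (Ω : Set (Euc d))
    (ν : Euc d → Euc d) (hΩo : IsOpen Ω) (hΩb : Bornology.IsBounded Ω)
    (f : Euc d → ℝ) (hf : MemLp f 2 (volume.restrict Ω))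
    (lam : ℝ) (hlam : 0 < lam)
    (hfeas : ∃ (u : Euc d → ℝ) (v : VRadon d Ω),
      MemLp u 2 (volume.restrict Ω) ∧ Admissible d Ω ν u v) :
    ∃ (u : Euc d → ℝ) (v : VRadon d Ω),
      MemLp u 2 (volume.restrict Ω) ∧ Admissible d Ω ν u v ∧
      (∀ (u' : Euc d → ℝ) (v' : VRadon d Ω),
        MemLp u' 2 (volume.restrict Ω) → Admissible d Ω ν u' v' →
        lam / 2 * (∫ x in Ω, (u x - f x) ^ 2) + v.tvNorm
          ≤ lam / 2 * (∫ x in Ω, (u' x - f x) ^ 2) + v'.tvNorm) ∧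
      (∀ (u' : Euc d → ℝ) (v' : VRadon d Ω),
        MemLp u' 2 (volume.restrict Ω) → Admissible d Ω ν u' v' →
        (∀ (u'' : Euc d → ℝ) (v'' : VRadon d Ω),
          MemLp u'' 2 (volume.restrict Ω) → Admissible d Ω ν u'' v'' →
          lam / 2 * (∫ x in Ω, (u' x - f x) ^ 2) + v'.tvNorm
            ≤ lam / 2 * (∫ x in Ω, (u'' x - f x) ^ 2) + v''.tvNorm) →
        u' =ᵐ[volume.restrict Ω] u) :=
  svf_denoising_existence_uniqueness_general d Ω ν hΩb f hf lam hlam
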